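/- arXiv:math/0601490 — 2 statements merged into one kernel-verified Lean document; each statement's English description precedes it below -/
import Mathlib

section
/- For every r-less arrow term f : A ⊢ B of S≤, every f-closed set U of occurrences of variables in A, and every atomic subformula x≤y of B, a member of U is connected by Gf to the occurrence of x in x≤y if and only if a member of U is connected by Gf to the occurrence of y in x≤y. -/
/-! Formalization of categories of proofs for linear equality (Dosen-Petric),
with the generality functor G into the category Br of Brauerian diagrams,
represented here by the matching relation on occurrences of variables. -/

namespace DP

/-- Formulae: atomic formulae `x R y` (for the binary predicate in question),
the constant true, and conjunctions. -/
inductive Fm (V : Type) : Type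
  | rel : V → V → Fm V
  | top : Fm V
  | and : Fm V → Fm V → Fm V

/-- Occurrences of variables in a formula: `false`/`true` are respectively the
left-hand and right-hand occurrences of variables in an atomic formula. -/
def Occ {V : Type} : Fm V → Type
  | .rel _ _ => Bool
  | .top => Empty
  | .and A B => Occ A ⊕ Occ B

/-- The matching relation on `source ⊕ target` induced by a relabelling function
from target occurrences to source occurrences. -/
def relabel {α β : Type} (φ : β → α) : α ⊕ β → α ⊕ β → Prop :=
  fun u v => (∃ o, u = Sum.inl (φ o) ∧ v = Sum.inr o) ∨
             (∃ o, u = Sum.inr o ∧ v = Sum.inl (φ o))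

/-- The matching relation induced by a relabelling function from source occurrences
to target occurrences. -/
def corelabel {α β : Type} (ψ : α → β) : α ⊕ β → α ⊕ β → Prop :=
  fun u v => (∃ o, u = Sum.inl o ∧ v = Sum.inr (ψ o)) ∨
             (∃ o, u = Sum.inr (ψ o) ∧ v = Sum.inl o)

/-- Horizontal (side-by-side) composition of Brauerian diagrams. -/
def tensRel {α β γ δ : Type}
    (p : α ⊕ β → α ⊕ β → Prop) (q : γ ⊕ δ → γ ⊕ δ → Prop) :
    (α ⊕ γ) ⊕ (β ⊕ δ) → (α ⊕ γ) ⊕ (β ⊕ δ) → Prop :=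
  fun u v =>
    (∃ x y, p x y ∧ u = Sum.map Sum.inl Sum.inl x ∧ v = Sum.map Sum.inl Sum.inl y) ∨
    (∃ x y, q x y ∧ u = Sum.map Sum.inr Sum.inr x ∧ v = Sum.map Sum.inr Sum.inr y)

/-- Vertical composition of Brauerian diagrams: two endpoints are matched in the
composite when they are joined by a path of edges through the middle points. -/
def compRel {α β γ : Type}
    (p : α ⊕ β → α ⊕ β → Prop) (q : β ⊕ γ → β ⊕ γ → Prop) :
    α ⊕ γ → α ⊕ γ → Prop :=
  fun u v => u ≠ v ∧
    Relation.ReflTransGen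
      (fun s t : α ⊕ β ⊕ γ =>
        (∃ x y, p x y ∧ s = Sum.map (fun a => a) Sum.inl x ∧
                        t = Sum.map (fun a => a) Sum.inl y) ∨
        (∃ x y, q x y ∧ s = Sum.inr x ∧ t = Sum.inr y))
      (Sum.map (fun a => a) Sum.inr u) (Sum.map (fun a => a) Sum.inr v)

/-- Arrow terms. -/
inductive Ar (V : Type) : Fm V → Fm V → Type
  | id (A : Fm V) : Ar V A A
  | comp {A B C : Fm V} : Ar V B C → Ar V A B → Ar V A C
  | tens {A B C D : Fm V} : Ar V A B → Ar V C D → Ar V (.and A C) (.and B D)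
  | bto (A B C : Fm V) : Ar V (.and A (.and B C)) (.and (.and A B) C)
  | bfrom (A B C : Fm V) : Ar V (.and (.and A B) C) (.and A (.and B C))
  | dto (A : Fm V) : Ar V (.and A .top) A
  | dfrom (A : Fm V) : Ar V A (.and A .top)
  | sto (A : Fm V) : Ar V (.and .top A) A
  | sfrom (A : Fm V) : Ar V A (.and .top A)
  | c (A B : Fm V) : Ar V (.and A B) (.and B A)
  | r (x : V) : Ar V .top (.rel x x)
  | t (x y z : V) : Ar V (.and (.rel x y) (.rel y z)) (.rel x z)

/-- The Brauerian diagram (matching relation on occurrences of variables in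
source and target) associated with an arrow term: the image under the functor G. -/
def GRel {V : Type} : ∀ {A B : Fm V}, Ar V A B → (Occ A ⊕ Occ B → Occ A ⊕ Occ B → Prop)
  | _, _, .id _ => relabel (fun o => o)
  | _, _, .comp g f => compRel (GRel f) (GRel g)
  | _, _, .tens f g => tensRel (GRel f) (GRel g)
  | _, _, .bto _ _ _ => relabel (fun o =>
      match o with
      | Sum.inl (Sum.inl a) => Sum.inl a
      | Sum.inl (Sum.inr b) => Sum.inr (Sum.inl b)
      | Sum.inr c => Sum.inr (Sum.inr c))
  | _, _, .bfrom _ _ _ => relabel (fun o =>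
      match o with
      | Sum.inl a => Sum.inl (Sum.inl a)
      | Sum.inr (Sum.inl b) => Sum.inl (Sum.inr b)
      | Sum.inr (Sum.inr c) => Sum.inr c)
  | _, _, .dto _ => relabel Sum.inl
  | _, _, .dfrom _ => corelabel Sum.inl
  | _, _, .sto _ => relabel Sum.inr
  | _, _, .sfrom _ => corelabel Sum.inr
  | _, _, .c _ _ => relabel Sum.swap
  | _, _, .r _ => fun u v =>
      (u = Sum.inr false ∧ v = Sum.inr true) ∨ (u = Sum.inr true ∧ v = Sum.inr false)
  | _, _, .t _ _ _ => fun u v =>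
      (u = Sum.inl (Sum.inl false) ∧ v = Sum.inr false) ∨
      (u = Sum.inr false ∧ v = Sum.inl (Sum.inl false)) ∨
      (u = Sum.inl (Sum.inr true) ∧ v = Sum.inr true) ∨
      (u = Sum.inr true ∧ v = Sum.inl (Sum.inr true)) ∨
      (u = Sum.inl (Sum.inl true) ∧ v = Sum.inl (Sum.inr false)) ∨
      (u = Sum.inl (Sum.inr false) ∧ v = Sum.inl (Sum.inl true))

/-- Equality of arrow terms: the smallest congruence generated by the defining
equations of the category. -/
inductive Eqv {V : Type} : ∀ {A B : Fm V}, Ar V A B → Ar V A B → Prop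
  | refl {A B : Fm V} (f : Ar V A B) : Eqv f f
  | symm {A B : Fm V} {f g : Ar V A B} : Eqv f g → Eqv g f
  | trans {A B : Fm V} {f g h : Ar V A B} : Eqv f g → Eqv g h → Eqv f h
  | congr_comp {A B C : Fm V} {g g' : Ar V B C} {f f' : Ar V A B} :
      Eqv g g' → Eqv f f' → Eqv (g.comp f) (g'.comp f')
  | congr_tens {A B C D : Fm V} {f f' : Ar V A B} {g g' : Ar V C D} :
      Eqv f f' → Eqv g g' → Eqv (f.tens g) (f'.tens g')
  | id_comp {A B : Fm V} (f : Ar V A B) : Eqv ((Ar.id B).comp f) f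
  | comp_id {A B : Fm V} (f : Ar V A B) : Eqv (f.comp (Ar.id A)) f
  | comp_assoc {A B C D : Fm V} (h : Ar V C D) (g : Ar V B C) (f : Ar V A B) :
      Eqv ((h.comp g).comp f) (h.comp (g.comp f))
  | tens_id (A B : Fm V) : Eqv ((Ar.id A).tens (Ar.id B)) (Ar.id (.and A B))
  | tens_comp {A1 B1 C1 A2 B2 C2 : Fm V} (g1 : Ar V B1 C1) (f1 : Ar V A1 B1)
      (g2 : Ar V B2 C2) (f2 : Ar V A2 B2) :
      Eqv ((g1.comp f1).tens (g2.comp f2)) ((g1.tens g2).comp (f1.tens f2))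
  | nat_b {A B C D E F : Fm V} (f : Ar V A D) (g : Ar V B E) (h : Ar V C F) :
      Eqv (((f.tens g).tens h).comp (Ar.bto A B C)) ((Ar.bto D E F).comp (f.tens (g.tens h)))
  | nat_d {A D : Fm V} (f : Ar V A D) :
      Eqv (f.comp (Ar.dto A)) ((Ar.dto D).comp (f.tens (Ar.id .top)))
  | nat_s {A D : Fm V} (f : Ar V A D) :
      Eqv (f.comp (Ar.sto A)) ((Ar.sto D).comp ((Ar.id .top).tens f))
  | bb1 (A B C : Fm V) : Eqv ((Ar.bfrom A B C).comp (Ar.bto A B C)) (Ar.id (.and A (.and B C)))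
  | bb2 (A B C : Fm V) : Eqv ((Ar.bto A B C).comp (Ar.bfrom A B C)) (Ar.id (.and (.and A B) C))
  | dd1 (A : Fm V) : Eqv ((Ar.dfrom A).comp (Ar.dto A)) (Ar.id (.and A .top))
  | dd2 (A : Fm V) : Eqv ((Ar.dto A).comp (Ar.dfrom A)) (Ar.id A)
  | ss1 (A : Fm V) : Eqv ((Ar.sfrom A).comp (Ar.sto A)) (Ar.id (.and .top A))
  | ss2 (A : Fm V) : Eqv ((Ar.sto A).comp (Ar.sfrom A)) (Ar.id A)
  | pent (A B C D : Fm V) :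
      Eqv ((Ar.bto (.and A B) C D).comp (Ar.bto A B (.and C D)))
        (((Ar.bto A B C).tens (Ar.id D)).comp
          ((Ar.bto A (.and B C) D).comp ((Ar.id A).tens (Ar.bto B C D))))
  | bds (A C : Fm V) :
      Eqv (Ar.bto A .top C) (((Ar.dfrom A).tens (Ar.id C)).comp ((Ar.id A).tens (Ar.sto C)))
  | nat_c {A B D E : Fm V} (f : Ar V A D) (g : Ar V B E) :
      Eqv ((g.tens f).comp (Ar.c A B)) ((Ar.c D E).comp (f.tens g))
  | cc (A B : Fm V) : Eqv ((Ar.c B A).comp (Ar.c A B)) (Ar.id (.and A B))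
  | hex (A B C : Fm V) :
      Eqv (Ar.c A (.and B C))
        ((Ar.bto B C A).comp (((Ar.id B).tens (Ar.c A C)).comp
          ((Ar.bfrom B A C).comp (((Ar.c A B).tens (Ar.id C)).comp (Ar.bto A B C)))))
  | rtd (x y : V) :
      Eqv ((Ar.t x y y).comp ((Ar.id (.rel x y)).tens (Ar.r y))) (Ar.dto (.rel x y))
  | rts (x y : V) :
      Eqv ((Ar.t y y x).comp ((Ar.r y).tens (Ar.id (.rel y x)))) (Ar.sto (.rel y x))
  | tb (x y z u : V) :
      Eqv ((Ar.t x y u).comp ((Ar.id (.rel x y)).tens (Ar.t y z u)))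
        ((Ar.t x z u).comp (((Ar.t x y z).tens (Ar.id (.rel z u))).comp
          (Ar.bto (.rel x y) (.rel y z) (.rel z u))))

/-- An arrow term is r-less when no `r` occurs in it. -/
def rLess {V : Type} : ∀ {A B : Fm V}, Ar V A B → Prop
  | _, _, .r _ => False
  | _, _, .comp g f => rLess g ∧ rLess f
  | _, _, .tens f g => rLess f ∧ rLess g
  | _, _, _ => True

/-- `SameAtom u v` holds when `u` and `v` are respectively the left-hand and
right-hand occurrences of variables in one and the same atomic subformula. -/
inductive SameAtom {V : Type} : ∀ {A : Fm V}, Occ A → Occ A → Prop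
  | atom (x y : V) : SameAtom (A := Fm.rel x y) false true
  | andl {A B : Fm V} {u v : Occ A} :
      SameAtom u v → SameAtom (A := Fm.and A B) (Sum.inl u) (Sum.inl v)
  | andr {A B : Fm V} {u v : Occ B} :
      SameAtom u v → SameAtom (A := Fm.and A B) (Sum.inr u) (Sum.inr v)

/-- A set U of occurrences of variables in the source A of `f : A ⊢ B` is
f-closed when it is closed under being in the same atomic subformula of A and
under being connected by a cup of Gf. -/
def FClosed {V : Type} {A B : Fm V} (f : Ar V A B) (U : Set (Occ A)) : Prop :=
  ∀ u u' : Occ A,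
    (SameAtom u u' ∨ SameAtom u' u ∨ GRel f (Sum.inl u) (Sum.inl u')) →
    (u ∈ U ↔ u' ∈ U)

/-! For an r-less arrow term `f : A ⊢ B` the diagram `Gf` has no caps, so every occurrence `b` in
`B` is matched with a source occurrence `src b`; this survives tensoring and composition, where the
partner of an endpoint is found by following the walk through the middle formula. The theorem then
amounts to `src x` and `src y` being linked, for every atom `x ≤ y` of `B`, by a chain of atoms of
`A` and cups of `Gf`, which no f-closed set can separate. This is proved by induction on `f`: for
`t_{x,y,z}` the chain is `x ≤ y`, the cup on `y`, `y ≤ z`; for `g ∘ f` the chain for `g` is carried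
back through `f`, its atoms becoming chains for `f` and its cups becoming cups of `g ∘ f`. -/

theorem _root_.Relation.EqvGen.map {α β : Type*} {r : α → α → Prop} {s : β → β → Prop}
    (φ : α → β) (h : ∀ x y, r x y → Relation.EqvGen s (φ x) (φ y)) {x y : α}
    (hxy : Relation.EqvGen r x y) : Relation.EqvGen s (φ x) (φ y) := by
  induction hxy with
  | rel x y hxy => exact h x y hxy
  | refl x => exact .refl _
  | symm x y _ ih => exact .symm _ _ ih
  | trans x y z _ _ ih ih' => exact .trans _ _ _ ih ih'

def compStep {α β γ : Type} (p : α ⊕ β → α ⊕ β → Prop) (q : β ⊕ γ → β ⊕ γ → Prop) :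
    α ⊕ (β ⊕ γ) → α ⊕ (β ⊕ γ) → Prop := fun s t =>
  (∃ x y, p x y ∧ s = Sum.map (fun a => a) Sum.inl x ∧ t = Sum.map (fun a => a) Sum.inl y) ∨
  (∃ x y, q x y ∧ s = Sum.inr x ∧ t = Sum.inr y)

theorem compRel_iff_reflTransGen {α β γ : Type} {p : α ⊕ β → α ⊕ β → Prop}
    {q : β ⊕ γ → β ⊕ γ → Prop} {u v : α ⊕ γ} :
    compRel p q u v ↔ u ≠ v ∧ Relation.ReflTransGen (compStep p q)
      (Sum.map (fun a => a) Sum.inr u) (Sum.map (fun a => a) Sum.inr v) :=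
  Iff.rfl

/-- The Brauerian diagram of an r-less arrow term: a perfect matching, given by its involution
`partner`, without caps, so that each target occurrence `b` is matched with a source occurrence
`src b`. -/
structure CaplessMatching {α β : Type} (p : α ⊕ β → α ⊕ β → Prop) where
  partner : α ⊕ β → α ⊕ β
  src : β → α
  partner_partner : ∀ u, partner (partner u) = u
  partner_ne : ∀ u, partner u ≠ u
  rel_iff : ∀ u v, p u v ↔ partner u = v
  partner_inr : ∀ b, partner (.inr b) = .inl (src b)

namespace CaplessMatching

section Basic

variable {α β : Type} {p : α ⊕ β → α ⊕ β → Prop} (m : CaplessMatching p)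

theorem partner_eq_comm {u v : α ⊕ β} : m.partner u = v ↔ m.partner v = u :=
  ⟨fun h => h ▸ m.partner_partner u, fun h => h ▸ m.partner_partner v⟩

theorem src_eq_of_partner_inr {b : β} {a : α} (h : m.partner (.inr b) = .inl a) :
    m.src b = a :=
  Sum.inl_injective ((m.partner_inr b).symm.trans h)

theorem partner_inl_src (b : β) : m.partner (.inl (m.src b)) = .inr b :=
  m.partner_eq_comm.1 (m.partner_inr b)

theorem exists_mem_rel_iff (U : Set α) (b : β) :
    (∃ a ∈ U, p (.inl a) (.inr b)) ↔ m.src b ∈ U := by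
  constructor
  · rintro ⟨a, ha, hab⟩
    rwa [m.src_eq_of_partner_inr (m.partner_eq_comm.1 ((m.rel_iff _ _).1 hab))]
  · exact fun hb => ⟨m.src b, hb, (m.rel_iff _ _).2 (m.partner_inl_src b)⟩

end Basic

/-- `e` only witnesses that `φ` is bijective: keeping `φ` itself makes `src` reduce to the
relabelling used in `GRel`. -/
def ofRelabel {α β : Type} (e : β ≃ α) {φ : β → α} (he : ∀ b, e b = φ b) :
    CaplessMatching (relabel φ) where
  partner := Sum.elim (fun a => .inr (e.symm a)) (fun b => .inl (φ b))
  src := φ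
  partner_partner := by rintro (a | b) <;> simp [← he]
  partner_ne := by rintro (a | b) <;> simp
  rel_iff := by
    rintro (a | b) (a' | b') <;> simp [relabel, ← he, Equiv.eq_symm_apply, eq_comm]
  partner_inr _ := rfl

def ofCorelabel {α β : Type} (e : α ≃ β) {ψ : α → β} (he : ∀ a, e a = ψ a) :
    CaplessMatching (corelabel ψ) where
  partner := Sum.elim (fun a => .inr (ψ a)) (fun b => .inl (e.symm b))
  src := e.symm
  partner_partner := by rintro (a | b) <;> simp [← he]
  partner_ne := by rintro (a | b) <;> simp
  rel_iff := by
    rintro (a | b) (a' | b') <;> simp [corelabel, ← he, Equiv.eq_symm_apply, eq_comm]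
  partner_inr _ := rfl

section Tensor

variable {α β γ δ : Type} {p : α ⊕ β → α ⊕ β → Prop} {q : γ ⊕ δ → γ ⊕ δ → Prop}
  (mp : CaplessMatching p) (mq : CaplessMatching q)

def tensPartner : (α ⊕ γ) ⊕ (β ⊕ δ) → (α ⊕ γ) ⊕ (β ⊕ δ)
  | .inl (.inl a) => Sum.map .inl .inl (mp.partner (.inl a))
  | .inl (.inr c) => Sum.map .inr .inr (mq.partner (.inl c))
  | .inr (.inl b) => Sum.map .inl .inl (mp.partner (.inr b))
  | .inr (.inr d) => Sum.map .inr .inr (mq.partner (.inr d))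

@[simp]
theorem tensPartner_map_inl (x : α ⊕ β) :
    tensPartner mp mq (Sum.map .inl .inl x) = Sum.map .inl .inl (mp.partner x) := by
  cases x <;> rfl

@[simp]
theorem tensPartner_map_inr (y : γ ⊕ δ) :
    tensPartner mp mq (Sum.map .inr .inr y) = Sum.map .inr .inr (mq.partner y) := by
  cases y <;> rfl

theorem exists_map_inl_or_map_inr (u : (α ⊕ γ) ⊕ (β ⊕ δ)) :
    (∃ x : α ⊕ β, u = Sum.map .inl .inl x) ∨ ∃ y : γ ⊕ δ, u = Sum.map .inr .inr y := by
  rcases u with (a | c) | (b | d)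
  exacts [.inl ⟨.inl a, rfl⟩, .inr ⟨.inl c, rfl⟩, .inl ⟨.inr b, rfl⟩, .inr ⟨.inr d, rfl⟩]

def tens : CaplessMatching (tensRel p q) where
  partner := tensPartner mp mq
  src := Sum.map mp.src mq.src
  partner_partner u := by
    obtain ⟨x, rfl⟩ | ⟨y, rfl⟩ := exists_map_inl_or_map_inr u <;> simp [partner_partner]
  partner_ne u := by
    obtain ⟨x, rfl⟩ | ⟨y, rfl⟩ := exists_map_inl_or_map_inr u
    · rw [tensPartner_map_inl]
      exact (Sum.map_injective.2 ⟨Sum.inl_injective, Sum.inl_injective⟩).ne (mp.partner_ne x)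
    · rw [tensPartner_map_inr]
      exact (Sum.map_injective.2 ⟨Sum.inr_injective, Sum.inr_injective⟩).ne (mq.partner_ne y)
  rel_iff u v := by
    constructor
    · rintro (⟨x, y, hxy, rfl, rfl⟩ | ⟨x, y, hxy, rfl, rfl⟩)
      · rw [tensPartner_map_inl, (mp.rel_iff x y).1 hxy]
      · rw [tensPartner_map_inr, (mq.rel_iff x y).1 hxy]
    · rintro rfl
      obtain ⟨x, rfl⟩ | ⟨y, rfl⟩ := exists_map_inl_or_map_inr u
      · exact .inl ⟨x, _, (mp.rel_iff _ _).2 rfl, rfl, tensPartner_map_inl mp mq x⟩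
      · exact .inr ⟨y, _, (mq.rel_iff _ _).2 rfl, rfl, tensPartner_map_inr mp mq y⟩
  partner_inr := by rintro (b | d) <;> simp [tensPartner, partner_inr]

end Tensor

section Composition

variable {α β γ : Type} {p : α ⊕ β → α ⊕ β → Prop} {q : β ⊕ γ → β ⊕ γ → Prop}
  (mp : CaplessMatching p) (mq : CaplessMatching q)

/-- Where the walk entering the middle point `b` from the `p` side ends: since `p` has no caps, a
cup `b — b'` of `q` is followed by the line from `b'` to `src b'`. -/
def exitMid (b : β) : α ⊕ γ :=
  match mq.partner (.inl b) with
  | .inl b' => .inl (mp.src b')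
  | .inr c => .inr c

def compPartner : α ⊕ γ → α ⊕ γ
  | .inl a =>
    match mp.partner (.inl a) with
    | .inl a' => .inl a'
    | .inr b => exitMid mp mq b
  | .inr c => .inl (mp.src (mq.src c))

variable {mp mq}

theorem exitMid_of_partner_inl {b b' : β} (h : mq.partner (.inl b) = .inl b') :
    exitMid mp mq b = .inl (mp.src b') := by
  rw [exitMid, h]

theorem exitMid_of_partner_inr {b : β} {c : γ} (h : mq.partner (.inl b) = .inr c) :
    exitMid mp mq b = .inr c := by
  rw [exitMid, h]

theorem compPartner_of_partner_inl {a a' : α} (h : mp.partner (.inl a) = .inl a') :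
    compPartner mp mq (.inl a) = .inl a' := by
  rw [compPartner, h]

theorem compPartner_of_partner_inr {a : α} {b : β} (h : mp.partner (.inl a) = .inr b) :
    compPartner mp mq (.inl a) = exitMid mp mq b := by
  rw [compPartner, h]

variable (mp mq)

theorem compPartner_inr (c : γ) : compPartner mp mq (.inr c) = .inl (mp.src (mq.src c)) := rfl

theorem compPartner_ne (u : α ⊕ γ) : compPartner mp mq u ≠ u := by
  rcases u with a | c
  · rcases ha : mp.partner (.inl a) with a' | b
    · rw [compPartner_of_partner_inl ha]
      exact fun h => mp.partner_ne _ (ha.trans (congrArg Sum.inl (Sum.inl_injective h)))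
    · rw [compPartner_of_partner_inr ha]
      rcases hb : mq.partner (.inl b) with b' | c
      · rw [exitMid_of_partner_inl hb]
        intro h
        have : b' = b := Sum.inr_injective <| by
          rw [← mp.partner_inl_src b', Sum.inl_injective h, ha]
        exact mq.partner_ne _ (hb.trans (congrArg Sum.inl this))
      · rw [exitMid_of_partner_inr hb]
        exact Sum.inr_ne_inl
  · exact Sum.inl_ne_inr

theorem compPartner_compPartner (u : α ⊕ γ) : compPartner mp mq (compPartner mp mq u) = u := by
  rcases u with a | c
  · rcases ha : mp.partner (.inl a) with a' | b
    · rw [compPartner_of_partner_inl ha, compPartner_of_partner_inl (mp.partner_eq_comm.1 ha)]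
    · rw [compPartner_of_partner_inr ha]
      rcases hb : mq.partner (.inl b) with b' | c
      · rw [exitMid_of_partner_inl hb, compPartner_of_partner_inr (mp.partner_inl_src b'),
          exitMid_of_partner_inl (mq.partner_eq_comm.1 hb),
          mp.src_eq_of_partner_inr (mp.partner_eq_comm.1 ha)]
      · rw [exitMid_of_partner_inr hb, compPartner_inr,
          mq.src_eq_of_partner_inr (mq.partner_eq_comm.1 hb),
          mp.src_eq_of_partner_inr (mp.partner_eq_comm.1 ha)]
  · rw [compPartner_inr, compPartner_of_partner_inr (mp.partner_inl_src _),
      exitMid_of_partner_inr (mq.partner_inl_src _)]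

/-- The two endpoints of the walk through a point; they do not change along `compStep`. -/
def walkEnds : α ⊕ (β ⊕ γ) → α ⊕ γ → Prop
  | .inl a, e => e = .inl a ∨ e = compPartner mp mq (.inl a)
  | .inr (.inl b), e => e = .inl (mp.src b) ∨ e = exitMid mp mq b
  | .inr (.inr c), e => e = .inr c ∨ e = compPartner mp mq (.inr c)

theorem walkEnds_iff_of_compStep {s t : α ⊕ (β ⊕ γ)} (hst : compStep p q s t) (e : α ⊕ γ) :
    walkEnds mp mq s e ↔ walkEnds mp mq t e := by
  rcases hst with ⟨x, y, hxy, rfl, rfl⟩ | ⟨x, y, hxy, rfl, rfl⟩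
  · have h := (mp.rel_iff x y).1 hxy
    rcases x with a | b <;> rcases y with a' | b'
    · simp only [walkEnds, Sum.map_inl, compPartner_of_partner_inl h,
        compPartner_of_partner_inl (mp.partner_eq_comm.1 h)]
      tauto
    · simp only [walkEnds, Sum.map_inl, Sum.map_inr, compPartner_of_partner_inr h,
        mp.src_eq_of_partner_inr (mp.partner_eq_comm.1 h)]
    · simp only [walkEnds, Sum.map_inl, Sum.map_inr,
        compPartner_of_partner_inr (mp.partner_eq_comm.1 h), mp.src_eq_of_partner_inr h]
    · exact absurd (mp.partner_inr b ▸ h) Sum.inl_ne_inr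
  · have h := (mq.rel_iff x y).1 hxy
    rcases x with b | c <;> rcases y with b' | c'
    · simp only [walkEnds, exitMid_of_partner_inl h,
        exitMid_of_partner_inl (mq.partner_eq_comm.1 h)]
      tauto
    · simp only [walkEnds, exitMid_of_partner_inr h, compPartner_inr,
        mq.src_eq_of_partner_inr (mq.partner_eq_comm.1 h)]
      tauto
    · simp only [walkEnds, exitMid_of_partner_inr (mq.partner_eq_comm.1 h), compPartner_inr,
        mq.src_eq_of_partner_inr h]
      tauto
    · exact absurd (mq.partner_inr c ▸ h) Sum.inl_ne_inr

theorem walkEnds_iff_of_reflTransGen {s t : α ⊕ (β ⊕ γ)}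
    (hst : Relation.ReflTransGen (compStep p q) s t) (e : α ⊕ γ) :
    walkEnds mp mq s e ↔ walkEnds mp mq t e := by
  induction hst with
  | refl => rfl
  | tail _ hstep ih => exact ih.trans (walkEnds_iff_of_compStep mp mq hstep e)

theorem walkEnds_map_inr (u e : α ⊕ γ) :
    walkEnds mp mq (Sum.map (fun a => a) Sum.inr u) e ↔ e = u ∨ e = compPartner mp mq u := by
  rcases u with a | c <;> rfl

variable {mp mq}

theorem compStep_left {x y : α ⊕ β} (h : mp.partner x = y) :
    compStep p q (Sum.map (fun a => a) Sum.inl x) (Sum.map (fun a => a) Sum.inl y) :=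
  .inl ⟨x, y, (mp.rel_iff x y).2 h, rfl, rfl⟩

theorem compStep_right {x y : β ⊕ γ} (h : mq.partner x = y) :
    compStep p q (.inr x) (.inr y) :=
  .inr ⟨x, y, (mq.rel_iff x y).2 h, rfl, rfl⟩

variable (mp mq)

theorem reflTransGen_compStep_compPartner (u : α ⊕ γ) :
    Relation.ReflTransGen (compStep p q) (Sum.map (fun a => a) Sum.inr u)
      (Sum.map (fun a => a) Sum.inr (compPartner mp mq u)) := by
  rcases u with a | c
  · rcases ha : mp.partner (.inl a) with a' | b
    · rw [compPartner_of_partner_inl ha]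
      exact .single (compStep_left ha)
    · rw [compPartner_of_partner_inr ha]
      refine .head (compStep_left ha) ?_
      rcases hb : mq.partner (.inl b) with b' | c
      · rw [exitMid_of_partner_inl hb]
        exact .head (compStep_right hb) (.single (compStep_left (mp.partner_inr b')))
      · rw [exitMid_of_partner_inr hb]
        exact .single (compStep_right hb)
  · exact .head (compStep_right (mq.partner_inr c)) (.single (compStep_left (mp.partner_inr _)))

theorem compRel_iff (u v : α ⊕ γ) : compRel p q u v ↔ compPartner mp mq u = v := by
  rw [compRel_iff_reflTransGen]
  constructor
  · rintro ⟨hne, hwalk⟩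
    have hv := (walkEnds_iff_of_reflTransGen mp mq hwalk v).2
      ((walkEnds_map_inr mp mq v v).2 (.inl rfl))
    exact ((walkEnds_map_inr mp mq u v).1 hv).resolve_left (Ne.symm hne) |>.symm
  · rintro rfl
    exact ⟨(compPartner_ne mp mq u).symm, reflTransGen_compStep_compPartner mp mq u⟩

def comp : CaplessMatching (compRel p q) where
  partner := compPartner mp mq
  src c := mp.src (mq.src c)
  partner_partner := compPartner_compPartner mp mq
  partner_ne := compPartner_ne mp mq
  rel_iff := compRel_iff mp mq
  partner_inr _ := rfl

variable {mp mq}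

theorem compRel_inl_inl_of_partner {a a' : α} (h : mp.partner (.inl a) = .inl a') :
    compRel p q (.inl a) (.inl a') :=
  ⟨fun e => mp.partner_ne _ (h.trans (congrArg Sum.inl (Sum.inl_injective e).symm)),
    .single (compStep_left h)⟩

theorem compRel_src_src_of_partner {b b' : β} (h : mq.partner (.inl b) = .inl b') :
    compRel p q (.inl (mp.src b)) (.inl (mp.src b')) :=
  (compRel_iff mp mq _ _).2 <| by
    rw [compPartner_of_partner_inr (mp.partner_inl_src b), exitMid_of_partner_inl h]

end Composition

def transPartner : (Bool ⊕ Bool) ⊕ Bool → (Bool ⊕ Bool) ⊕ Bool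
  | .inl (.inl false) => .inr false
  | .inl (.inl true) => .inl (.inr false)
  | .inl (.inr false) => .inl (.inl true)
  | .inl (.inr true) => .inr true
  | .inr false => .inl (.inl false)
  | .inr true => .inl (.inr true)

def transSrc : Bool → Bool ⊕ Bool
  | false => .inl false
  | true => .inr true

theorem transPartner_eq_iff (u v : (Bool ⊕ Bool) ⊕ Bool) :
    (u = .inl (.inl false) ∧ v = .inr false ∨ u = .inr false ∧ v = .inl (.inl false) ∨
      u = .inl (.inr true) ∧ v = .inr true ∨ u = .inr true ∧ v = .inl (.inr true) ∨
      u = .inl (.inl true) ∧ v = .inl (.inr false) ∨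
      u = .inl (.inr false) ∧ v = .inl (.inl true)) ↔ transPartner u = v := by
  rcases u with ((_ | _) | (_ | _)) | (_ | _) <;> rcases v with ((_ | _) | (_ | _)) | (_ | _) <;>
    simp [transPartner]

def ofTrans {V : Type} (x y z : V) : CaplessMatching (GRel (Ar.t x y z)) where
  partner := transPartner
  src := transSrc
  partner_partner := show ∀ u, transPartner (transPartner u) = u by decide
  partner_ne := show ∀ u, transPartner u ≠ u by decide
  rel_iff := transPartner_eq_iff
  partner_inr := show ∀ b, transPartner (.inr b) = .inl (transSrc b) by decide

end CaplessMatching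

variable {V : Type}

instance : IsEmpty (Occ (Fm.top : Fm V)) := inferInstanceAs (IsEmpty Empty)

def Ar.matching : ∀ {A B : Fm V} (f : Ar V A B), rLess f → CaplessMatching (GRel f)
  | _, _, .id _, _ => .ofRelabel (Equiv.refl _) fun _ => rfl
  | _, _, .comp g f, h => .comp (f.matching h.2) (g.matching h.1)
  | _, _, .tens f g, h => .tens (f.matching h.1) (g.matching h.2)
  | _, _, .bto P Q R, _ =>
    .ofRelabel (Equiv.sumAssoc (Occ P) (Occ Q) (Occ R)) (by rintro ((_ | _) | _) <;> rfl)
  | _, _, .bfrom P Q R, _ =>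
    .ofRelabel (Equiv.sumAssoc (Occ P) (Occ Q) (Occ R)).symm (by rintro (_ | _ | _) <;> rfl)
  | _, _, .dto P, _ => .ofRelabel (Equiv.sumEmpty (Occ P) (Occ (.top : Fm V))).symm fun _ => rfl
  | _, _, .dfrom P, _ => .ofCorelabel (Equiv.sumEmpty (Occ P) (Occ (.top : Fm V))).symm fun _ => rfl
  | _, _, .sto P, _ => .ofRelabel (Equiv.emptySum (Occ (.top : Fm V)) (Occ P)).symm fun _ => rfl
  | _, _, .sfrom P, _ => .ofCorelabel (Equiv.emptySum (Occ (.top : Fm V)) (Occ P)).symm fun _ => rfl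
  | _, _, .c P Q, _ => .ofRelabel (Equiv.sumComm (Occ Q) (Occ P)) fun _ => rfl
  | _, _, .r _, h => h.elim
  | _, _, .t x y z, _ => .ofTrans x y z

def Linked {A B : Fm V} (f : Ar V A B) : Occ A → Occ A → Prop :=
  Relation.EqvGen fun u u' => SameAtom u u' ∨ GRel f (.inl u) (.inl u')

theorem FClosed.mem_iff_of_linked {A B : Fm V} {f : Ar V A B} {U : Set (Occ A)}
    (hU : FClosed f U) {u u' : Occ A} (h : Linked f u u') : u ∈ U ↔ u' ∈ U := by
  induction h with
  | rel u u' h => exact hU u u' (h.imp_right .inr)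
  | refl => rfl
  | symm _ _ _ ih => exact ih.symm
  | trans _ _ _ _ _ ih ih' => exact ih.trans ih'

namespace Linked

variable {A B C D : Fm V}

theorem of_sameAtom {f : Ar V A B} {u u' : Occ A} (h : SameAtom u u') : Linked f u u' :=
  .rel _ _ (.inl h)

theorem of_cup {f : Ar V A B} {u u' : Occ A} (h : GRel f (.inl u) (.inl u')) : Linked f u u' :=
  .rel _ _ (.inr h)

theorem comp_left {f : Ar V A B} {g : Ar V B C} (mf : CaplessMatching (GRel f))
    {u u' : Occ A} (h : Linked f u u') : Linked (g.comp f) u u' :=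
  Relation.EqvGen.mono (fun _ _ => Or.imp_right fun hc =>
    CaplessMatching.compRel_inl_inl_of_partner ((mf.rel_iff _ _).1 hc)) _ _ h

theorem comp_src {f : Ar V A B} {g : Ar V B C} (mf : CaplessMatching (GRel f))
    (mg : CaplessMatching (GRel g))
    (hf : ∀ b b', SameAtom b b' → Linked f (mf.src b) (mf.src b')) {b b' : Occ B}
    (h : Linked g b b') : Linked (g.comp f) (mf.src b) (mf.src b') :=
  h.map mf.src fun b b' => Or.rec (fun hs => comp_left mf (hf b b' hs)) fun hc =>
    of_cup (CaplessMatching.compRel_src_src_of_partner ((mg.rel_iff _ _).1 hc))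

theorem tens_inl {f : Ar V A B} {g : Ar V C D} {u u' : Occ A} (h : Linked f u u') :
    Linked (f.tens g) (.inl u) (.inl u') :=
  h.map Sum.inl fun _ _ => Or.rec (fun hs => of_sameAtom hs.andl) fun hc =>
    of_cup (.inl ⟨_, _, hc, rfl, rfl⟩)

theorem tens_inr {f : Ar V A B} {g : Ar V C D} {u u' : Occ C} (h : Linked g u u') :
    Linked (f.tens g) (.inr u) (.inr u') :=
  h.map Sum.inr fun _ _ => Or.rec (fun hs => of_sameAtom hs.andr) fun hc =>
    of_cup (.inr ⟨_, _, hc, rfl, rfl⟩)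

theorem t_outer (x y z : V) :
    Linked (Ar.t x y z) (.inl false) (.inr true) :=
  .trans _ _ _ (of_sameAtom (.andl (.atom x y))) <|
    .trans _ _ _ (of_cup (.inr <| .inr <| .inr <| .inr <| .inl ⟨rfl, rfl⟩))
      (of_sameAtom (.andr (.atom y z)))

end Linked

theorem linked_src_of_sameAtom {A B : Fm V} (f : Ar V A B) (hf : rLess f) {u v : Occ B}
    (huv : SameAtom u v) : Linked f ((f.matching hf).src u) ((f.matching hf).src v) := by
  induction f with
  | id => exact .of_sameAtom huv
  | comp g f ihg ihf => exact (ihg hf.1 huv).comp_src _ (g.matching hf.1) fun _ _ h => ihf hf.2 h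
  | tens f g ihf ihg =>
    cases huv with
    | andl h => exact (ihf hf.1 h).tens_inl
    | andr h => exact (ihg hf.2 h).tens_inr
  | bto =>
    refine .of_sameAtom ?_
    cases huv with
    | andl h =>
      cases h with
      | andl h => exact .andl h
      | andr h => exact .andr (.andl h)
    | andr h => exact .andr (.andr h)
  | bfrom =>
    refine .of_sameAtom ?_
    cases huv with
    | andl h => exact .andl (.andl h)
    | andr h =>
      cases h with
      | andl h => exact .andl (.andr h)
      | andr h => exact .andr h
  | dto => exact .of_sameAtom huv.andl
  | sto => exact .of_sameAtom huv.andr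
  | dfrom =>
    cases huv with
    | andl h => exact .of_sameAtom h
    | andr h => cases h
  | sfrom =>
    cases huv with
    | andl h => cases h
    | andr h => exact .of_sameAtom h
  | c =>
    refine .of_sameAtom ?_
    cases huv with
    | andl h => exact .andr h
    | andr h => exact .andl h
  | r => exact hf.elim
  | t x y z =>
    cases huv
    exact .t_outer x y z

/-- for r-less f and f-closed U, a member of U is connected by Gf
to the occurrence of x in an atomic subformula x R y of B iff a member of U is
connected by Gf to the occurrence of y. -/
theorem stmt7 {V : Type} {A B : Fm V} (f : Ar V A B) (hf : rLess f)
    (U : Set (Occ A)) (hU : FClosed f U) (u v : Occ B) (huv : SameAtom u v) :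
    (∃ w ∈ U, GRel f (Sum.inl w) (Sum.inr u)) ↔
    (∃ w ∈ U, GRel f (Sum.inl w) (Sum.inr v)) := by
  rw [(f.matching hf).exists_mem_rel_iff, (f.matching hf).exists_mem_rel_iff]
  exact hU.mem_iff_of_linked (linked_src_of_sameAtom f hf huv)

end DP
end

section
/- For f : A ⊢ B an r-less arrow term of S≤, every maximal sequence (the f-closed set generated by a single occurrence of a variable in A) is a set {u₁, u₂, …, u₂ₙ₋₁, u₂ₙ} of occurrences of variables in A, for some n ≥ 1, such that u₂ᵢ₋₁ ≤ u₂ᵢ is a subformula of A for 1 ≤ i ≤ n and u₂ⱼ and u₂ⱼ₊₁ are connected by a cup of Gf for 1 ≤ j ≤ n−1; moreover there exists an atomic subformula x≤y of B such that u₁ is connected by Gf to the occurrence of x in x≤y and u₂ₙ is connected by Gf to the occurrence of y in x≤y. -/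
/-! Formalization of categories of proofs for linear equality (Dosen-Petric),
with the generality functor G into the category Br of Brauerian diagrams,
represented here by the matching relation on occurrences of variables. -/

namespace DP

/-- The maximal sequence generated by an occurrence: the smallest f-closed set
containing it. -/
def genClosed {V : Type} {A B : Fm V} (f : Ar V A B) (u0 : Occ A) : Set (Occ A) :=
  ⋂₀ {U : Set (Occ A) | FClosed f U ∧ u0 ∈ U}

/-!
For an r-less arrow term `f : A ⊢ B` the diagram `Gf` has no caps, so it consists of a map
sending each occurrence in `B` to the occurrence in `A` it is linked with, together with the cups
among the remaining occurrences of `A`. By induction on `f`, the occurrences of `A` split into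
chains `u₁ ≤ u₂ ⌣ u₃ ≤ u₄ ⌣ ⋯ ≤ u₂ₙ`, one for each atom `x ≤ y` of `B`, running from the
occurrence linked to `x` to the one linked to `y`; for a composite, the chains of the first
diagram are spliced together along the chains of the second. Each occurrence has at most one
atom partner and at most one cup partner, and the ends of a chain carry no cup, so a chain has
no repetitions and its set of elements is f-closed: it is the maximal sequence of each of its
elements.
-/

theorem _root_.List.image_getD_Iio_length {α : Type*} (l : List α) (d : α) :
    (l.getD · d) '' Set.Iio l.length = {x | x ∈ l} := by
  ext x
  constructor
  · rintro ⟨i, hi, rfl⟩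
    show l.getD i d ∈ l
    rw [List.getD_eq_getElem _ _ hi]
    exact List.getElem_mem hi
  · intro hx
    obtain ⟨i, hi, rfl⟩ := List.mem_iff_getElem.1 hx
    exact ⟨i, hi, List.getD_eq_getElem _ _ hi⟩

theorem _root_.List.Nodup.injOn_getD {α : Type*} {l : List α} (h : l.Nodup) (d : α) :
    Set.InjOn (l.getD · d) (Set.Iio l.length) := by
  intro i hi j hj hij
  rw [Set.mem_Iio] at hi hj
  simp only [List.getD_eq_getElem _ _ hi, List.getD_eq_getElem _ _ hj] at hij
  exact h.getElem_inj_iff.1 hij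

variable {V : Type}

namespace SameAtom

variable {A : Fm V} {u v w : Occ A}

theorem right_unique (h : SameAtom u v) (h' : SameAtom u w) : v = w := by
  induction h with
  | atom => cases h'; rfl
  | andl _ ih => cases h' with | andl h' => rw [ih h']
  | andr _ ih => cases h' with | andr h' => rw [ih h']

theorem left_unique (h : SameAtom u w) (h' : SameAtom v w) : u = v := by
  induction h with
  | atom => cases h'; rfl
  | andl _ ih => cases h' with | andl h' => rw [ih h']
  | andr _ ih => cases h' with | andr h' => rw [ih h']

theorem not_sameAtom_right (h : SameAtom u v) : ¬ SameAtom v w := by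
  induction h with
  | atom => rintro ⟨⟩
  | andl _ ih => intro h'; cases h' with | andl h' => exact ih h'
  | andr _ ih => intro h'; cases h' with | andr h' => exact ih h'

theorem ne (h : SameAtom u v) : u ≠ v := by
  rintro rfl
  exact h.not_sameAtom_right h

theorem exists_partner : ∀ {A : Fm V} (u : Occ A), (∃ v, SameAtom u v) ∨ ∃ v, SameAtom v u
  | .rel x y, false => .inl ⟨true, .atom x y⟩
  | .rel x y, true => .inr ⟨false, .atom x y⟩
  | .top, e => e.elim
  | .and _ _, .inl u => (exists_partner u).imp (fun ⟨v, h⟩ => ⟨.inl v, h.andl⟩)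
      (fun ⟨v, h⟩ => ⟨.inl v, h.andl⟩)
  | .and _ _, .inr u => (exists_partner u).imp (fun ⟨v, h⟩ => ⟨.inr v, h.andr⟩)
      (fun ⟨v, h⟩ => ⟨.inr v, h.andr⟩)

theorem sumAssoc {A B C : Fm V} ⦃b b' : Occ ((A.and B).and C)⦄ (h : SameAtom b b') :
    SameAtom (A := A.and (B.and C)) (Equiv.sumAssoc (Occ A) (Occ B) (Occ C) b)
      (Equiv.sumAssoc (Occ A) (Occ B) (Occ C) b') := by
  rcases h with _ | h | h
  · rcases h with _ | h | h
    exacts [.andl (B := .and _ _) h, .andr (.andl h)]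
  · exact .andr (.andr h)

theorem sumAssoc_symm {A B C : Fm V} ⦃b b' : Occ (A.and (B.and C))⦄
    (h : SameAtom b b') :
    SameAtom (A := (A.and B).and C) ((Equiv.sumAssoc (Occ A) (Occ B) (Occ C)).symm b)
      ((Equiv.sumAssoc (Occ A) (Occ B) (Occ C)).symm b') := by
  rcases h with _ | h | h
  · exact .andl (.andl h)
  · rcases h with _ | h | h
    exacts [.andl (.andr h), .andr (A := .and _ _) h]

theorem sumComm {A B : Fm V} ⦃b b' : Occ (B.and A)⦄ (h : SameAtom b b') :
    SameAtom (A := A.and B) (Equiv.sumComm (Occ B) (Occ A) b)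
      (Equiv.sumComm (Occ B) (Occ A) b') := by
  rcases h with _ | h | h
  exacts [.andr h, .andl h]

end SameAtom

section Chain

variable {A : Fm V}

inductive Chain (cup : Occ A → Occ A → Prop) : Occ A → Occ A → List (Occ A) → Prop
  | single {u v : Occ A} : SameAtom u v → Chain cup u v [u, v]
  | cons {u u' v w : Occ A} {l : List (Occ A)} :
      SameAtom u u' → cup u' v → Chain cup v w l → Chain cup u w (u :: u' :: l)

variable {cup : Occ A → Occ A → Prop} {u w x y : Occ A} {l : List (Occ A)}

namespace Chain

theorem mono {cup' : Occ A → Occ A → Prop} (hcup : ∀ ⦃a b⦄, cup a b → cup' a b)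
    (h : Chain cup u w l) : Chain cup' u w l := by
  induction h with
  | single hs => exact .single hs
  | cons hs hc _ ih => exact .cons hs (hcup hc) ih

theorem append {v z : Occ A} {l' : List (Occ A)} (h : Chain cup u w l) (hc : cup w v)
    (h' : Chain cup v z l') : Chain cup u z (l ++ l') := by
  induction h with
  | single hs => exact .cons hs hc h'
  | cons hs hc' _ ih => exact .cons hs hc' (ih hc)

theorem map {A' : Fm V} {cup' : Occ A' → Occ A' → Prop} (e : Occ A → Occ A')
    (he : ∀ ⦃a b⦄, SameAtom a b → SameAtom (e a) (e b))
    (hcup : ∀ ⦃a b⦄, cup a b → cup' (e a) (e b))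
    (h : Chain cup u w l) : Chain cup' (e u) (e w) (l.map e) := by
  induction h with
  | single hs => exact .single (he hs)
  | cons hs hc _ ih => exact .cons (he hs) (hcup hc) ih

theorem eq_of_not_cup (hcup : Relator.RightUnique cup) {w' : Occ A}
    {l' : List (Occ A)} (h : Chain cup u w l) (h' : Chain cup u w' l')
    (hw : ∀ a, ¬ cup w a) (hw' : ∀ a, ¬ cup w' a) : l = l' := by
  induction h generalizing l' with
  | single hs =>
    cases h' with
    | single hs' => rw [hs.right_unique hs']
    | cons hs' hc' => exact absurd (hs.right_unique hs' ▸ hc') (hw _)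
  | cons hs hc _ ih =>
    cases h' with
    | single hs' => exact absurd (hs.right_unique hs' ▸ hc) (hw' _)
    | cons hs' hc' h' =>
      obtain rfl := hs.right_unique hs'
      obtain rfl := hcup hc hc'
      rw [ih h' hw]

theorem length_eq (h : Chain cup u w l) : ∃ n, 1 ≤ n ∧ l.length = 2 * n := by
  induction h with
  | single => exact ⟨1, le_rfl, rfl⟩
  | cons _ _ _ ih =>
    obtain ⟨n, -, hn⟩ := ih
    exact ⟨n + 1, by omega, by simp only [List.length_cons, hn]; ring⟩

theorem left_mem (h : Chain cup u w l) : u ∈ l := by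
  cases h <;> exact List.mem_cons_self

theorem getD_zero (h : Chain cup u w l) (d : Occ A) : l.getD 0 d = u := by
  cases h <;> rfl

theorem getD_length_sub_one (h : Chain cup u w l) (d : Occ A) : l.getD (l.length - 1) d = w := by
  induction h with
  | single => rfl
  | @cons u u' v w l _ _ h ih =>
    obtain ⟨n, hn, hlen⟩ := h.length_eq
    rw [← ih, show (u :: u' :: l).length - 1 = l.length - 1 + 2 by
      simp only [List.length_cons]; omega]
    rfl

theorem sameAtom_getD (h : Chain cup u w l) (d : Occ A) :
    ∀ i, 2 * i + 1 < l.length → SameAtom (l.getD (2 * i) d) (l.getD (2 * i + 1) d) := by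
  induction h with
  | single hs =>
    intro i hi
    obtain rfl : i = 0 := by simp only [List.length_cons, List.length_nil] at hi; omega
    exact hs
  | cons hs _ _ ih =>
    rintro (_ | i) hi
    · exact hs
    · simpa [Nat.mul_succ] using ih i (by simp only [List.length_cons] at hi; omega)

theorem cup_getD (h : Chain cup u w l) (d : Occ A) :
    ∀ i, 2 * i + 2 < l.length → cup (l.getD (2 * i + 1) d) (l.getD (2 * i + 2) d) := by
  induction h with
  | single => intro i hi; simp only [List.length_cons, List.length_nil] at hi; omega
  | @cons u u' v w l _ hc h ih =>
    rintro (_ | i) hi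
    · show cup u' (l.getD 0 d)
      rwa [h.getD_zero]
    · simpa [Nat.mul_succ] using ih i (by simp only [List.length_cons] at hi; omega)

theorem mem_of_sameAtom (h : Chain cup u w l) (hx : x ∈ l) (hxy : SameAtom x y ∨ SameAtom y x) :
    y ∈ l := by
  induction h with
  | single hs =>
    simp only [List.mem_cons, List.not_mem_nil, or_false] at hx ⊢
    rcases hx with rfl | rfl <;> rcases hxy with hxy | hxy
    · exact .inr (hs.right_unique hxy).symm
    · exact absurd hs (hxy.not_sameAtom_right)
    · exact absurd hxy hs.not_sameAtom_right
    · exact .inl (hxy.left_unique hs)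
  | cons hs _ _ ih =>
    simp only [List.mem_cons] at hx ⊢
    rcases hx with rfl | rfl | hx
    · rcases hxy with hxy | hxy
      · exact .inr (.inl (hs.right_unique hxy).symm)
      · exact absurd hs hxy.not_sameAtom_right
    · rcases hxy with hxy | hxy
      · exact absurd hxy hs.not_sameAtom_right
      · exact .inl (hxy.left_unique hs)
    · exact .inr (.inr (ih hx))

theorem mem_or_eq_of_cup (hsymm : ∀ ⦃a b⦄, cup a b → cup b a) (hcup : Relator.RightUnique cup)
    (hw : ∀ a, ¬ cup w a) (h : Chain cup u w l) (hx : x ∈ l) (hxy : cup x y) :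
    y ∈ l ∨ x = u := by
  induction h with
  | single hs =>
    simp only [List.mem_cons, List.not_mem_nil, or_false] at hx
    rcases hx with rfl | rfl
    · exact .inr rfl
    · exact absurd hxy (hw _)
  | cons hs hc h ih =>
    simp only [List.mem_cons] at hx ⊢
    rcases hx with rfl | rfl | hx
    · exact .inr rfl
    · exact .inl (.inr (.inr (hcup hxy hc ▸ h.left_mem)))
    · rcases ih hw hx with hy | rfl
      · exact .inl (.inr (.inr hy))
      · exact .inl (.inr (.inl (hcup hxy (hsymm hc))))

theorem mem_of_adj (hsymm : ∀ ⦃a b⦄, cup a b → cup b a) (hcup : Relator.RightUnique cup)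
    (hu : ∀ a, ¬ cup u a) (hw : ∀ a, ¬ cup w a) (h : Chain cup u w l) (hx : x ∈ l)
    (hxy : SameAtom x y ∨ SameAtom y x ∨ cup x y) : y ∈ l := by
  rcases hxy with hxy | hxy | hxy
  · exact h.mem_of_sameAtom hx (.inl hxy)
  · exact h.mem_of_sameAtom hx (.inr hxy)
  · rcases h.mem_or_eq_of_cup hsymm hcup hw hx hxy with hy | rfl
    · exact hy
    · exact absurd hxy (hu y)

theorem exists_suffix (h : Chain cup u w l) (hx : x ∈ l) (hxy : SameAtom x y) :
    ∃ l', l' <:+ l ∧ Chain cup x w l' := by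
  induction h with
  | single hs =>
    simp only [List.mem_cons, List.not_mem_nil, or_false] at hx
    rcases hx with rfl | rfl
    · exact ⟨_, List.suffix_refl _, .single hs⟩
    · exact absurd hxy hs.not_sameAtom_right
  | cons hs hc h ih =>
    simp only [List.mem_cons] at hx
    rcases hx with rfl | rfl | hx
    · exact ⟨_, List.suffix_refl _, .cons hs hc h⟩
    · exact absurd hxy hs.not_sameAtom_right
    · obtain ⟨l', hl', h'⟩ := ih hx
      exact ⟨l', hl'.trans ((List.suffix_cons _ _).trans (List.suffix_cons _ _)), h'⟩

theorem nodup (hcup : Relator.RightUnique cup) (hw : ∀ a, ¬ cup w a)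
    (h : Chain cup u w l) : l.Nodup := by
  induction h with
  | single hs => simpa using hs.ne
  | @cons u u' v w l hs hc h ih =>
    have hu : u ∉ l := by
      intro hu
      obtain ⟨l', hl', h'⟩ := h.exists_suffix hu hs
      have := hl'.length_le
      rw [h'.eq_of_not_cup hcup (.cons hs hc h) hw hw] at this
      simp at this
    have hu' : u' ∉ l := fun hu' => hu (h.mem_of_sameAtom hu' (.inr hs))
    simp only [List.nodup_cons, List.mem_cons, not_or]
    exact ⟨⟨hs.ne, hu⟩, hu', ih hw⟩

theorem mem_iff_of_closed {U : Set (Occ A)}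
    (hU : ∀ a b, SameAtom a b ∨ cup a b → (a ∈ U ↔ b ∈ U)) (h : Chain cup u w l) (hx : x ∈ l) :
    x ∈ U ↔ u ∈ U := by
  induction h with
  | single hs =>
    simp only [List.mem_cons, List.not_mem_nil, or_false] at hx
    rcases hx with rfl | rfl
    · rfl
    · exact (hU _ _ (.inl hs)).symm
  | cons hs hc h ih =>
    simp only [List.mem_cons] at hx
    rcases hx with rfl | rfl | hx
    · rfl
    · exact (hU _ _ (.inl hs)).symm
    · rw [ih hx, ← hU _ _ (.inr hc), hU _ _ (.inl hs)]

end Chain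

end Chain

/-- The shape of `Gf` for an r-less `f : A ⊢ B`: each occurrence `b` in `B` is linked to `φ b`
in `A`, the other occurrences of `A` are paired by cups, and the occurrences of `A` fall into
chains running from `φ b` to `φ b'` for the atoms `b ≤ b'` of `B`. -/
structure Diagram (A B : Fm V) where
  φ : Occ B → Occ A
  cup : Occ A → Occ A → Prop
  φ_injective : Function.Injective φ
  cup_symm : ∀ ⦃a a'⦄, cup a a' → cup a' a
  cup_rightUnique : Relator.RightUnique cup
  cup_irrefl : ∀ a, ¬ cup a a
  not_cup_φ : ∀ b a, ¬ cup (φ b) a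
  exists_chain : ∀ ⦃b b'⦄, SameAtom b b' → ∃ l, Chain cup (φ b) (φ b') l
  exists_chain_mem : ∀ a, ∃ b b' l, SameAtom b b' ∧ Chain cup (φ b) (φ b') l ∧ a ∈ l

namespace Diagram

variable {A B C : Fm V}

def rel (D : Diagram A B) : Occ A ⊕ Occ B → Occ A ⊕ Occ B → Prop :=
  fun s t => Relation.Map D.cup Sum.inl Sum.inl s t ∨ relabel D.φ s t

section Rel

variable (D : Diagram A B)

theorem rel_inl_inl {a a' : Occ A} : D.rel (.inl a) (.inl a') ↔ D.cup a a' := by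
  simp [rel, Relation.Map, relabel]

theorem rel_φ (b : Occ B) : D.rel (.inl (D.φ b)) (.inr b) :=
  .inr (.inl ⟨b, rfl, rfl⟩)

theorem rel_symm ⦃s t⦄ (h : D.rel s t) : D.rel t s := by
  rcases h with ⟨a, a', h, rfl, rfl⟩ | ⟨b, rfl, rfl⟩ | ⟨b, rfl, rfl⟩
  · exact .inl ⟨a', a, D.cup_symm h, rfl, rfl⟩
  · exact .inr (.inr ⟨b, rfl, rfl⟩)
  · exact .inr (.inl ⟨b, rfl, rfl⟩)

theorem rel_rightUnique : Relator.RightUnique D.rel := by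
  rintro s t t' (⟨a, a₁, h₁, rfl, rfl⟩ | ⟨b₁, rfl, rfl⟩ | ⟨b₁, rfl, rfl⟩)
    (⟨a, a₂, h₂, ha, rfl⟩ | ⟨b₂, hb, rfl⟩ | ⟨b₂, hb, rfl⟩)
  · cases ha; rw [D.cup_rightUnique h₁ h₂]
  · cases hb; exact (D.not_cup_φ _ _ h₁).elim
  · cases hb
  · cases ha; exact (D.not_cup_φ _ _ h₂).elim
  · rw [D.φ_injective (Sum.inl_injective hb)]
  · cases hb
  · cases ha
  · cases hb
  · cases hb; rfl

theorem rel_irrefl (s) : ¬ D.rel s s := by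
  rintro (⟨a, a', h, rfl, he⟩ | ⟨b, rfl, h⟩ | ⟨b, rfl, h⟩)
  · cases he; exact D.cup_irrefl a h
  · cases h
  · cases h

theorem reflGen_rel_trans {s t r} (h : Relation.ReflGen D.rel s t)
    (h' : Relation.ReflGen D.rel t r) : Relation.ReflGen D.rel s r := by
  cases h with
  | refl => exact h'
  | single h =>
    cases h' with
    | refl => exact .single h
    | single h' => obtain rfl := D.rel_rightUnique (D.rel_symm h) h'; exact .refl

theorem chain_eq {b b' : Occ B} {l l' : List (Occ A)} (h : Chain D.cup (D.φ b) (D.φ b') l)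
    (h' : Chain D.cup (D.φ b) (D.φ b') l') : l = l' :=
  h.eq_of_not_cup D.cup_rightUnique h' (D.not_cup_φ b') (D.not_cup_φ b')

end Rel

def ofEquiv (e : Occ B ≃ Occ A) (he : ∀ ⦃b b'⦄, SameAtom b b' → SameAtom (e b) (e b')) :
    Diagram A B where
  φ := e
  cup _ _ := False
  φ_injective := e.injective
  cup_symm _ _ h := h
  cup_rightUnique _ _ _ h := h.elim
  cup_irrefl _ h := h
  not_cup_φ _ _ h := h
  exists_chain _ _ h := ⟨_, .single (he h)⟩
  exists_chain_mem a := by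
    obtain ⟨b, rfl⟩ := e.surjective a
    rcases SameAtom.exists_partner b with ⟨b', h⟩ | ⟨b', h⟩
    · exact ⟨b, b', _, h, .single (he h), List.mem_cons_self⟩
    · exact ⟨b', b, _, h, .single (he h), List.mem_cons_of_mem _ List.mem_cons_self⟩

theorem exists_relabel_eq_rel (e : Occ B ≃ Occ A)
    (he : ∀ ⦃b b'⦄, SameAtom b b' → SameAtom (e b) (e b')) {φ : Occ B → Occ A}
    (hφ : ∀ b, φ b = e b) : ∃ D : Diagram A B, relabel φ = D.rel := by
  refine ⟨ofEquiv e he, ?_⟩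
  funext s t
  simp [rel, ofEquiv, Relation.Map, funext hφ]

section Tens

variable {A₁ B₁ A₂ B₂ : Fm V} (D₁ : Diagram A₁ B₁) (D₂ : Diagram A₂ B₂)

def tens : Diagram (A₁.and A₂) (B₁.and B₂) where
  φ := Sum.map D₁.φ D₂.φ
  cup := Sum.LiftRel D₁.cup D₂.cup
  φ_injective := Sum.map_injective.2 ⟨D₁.φ_injective, D₂.φ_injective⟩
  cup_symm := by
    rintro _ _ (h | h)
    exacts [.inl (D₁.cup_symm h), .inr (D₂.cup_symm h)]
  cup_rightUnique := by
    rintro _ _ _ (h | h) h'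
    · cases h' with | inl h' => rw [D₁.cup_rightUnique h h']
    · cases h' with | inr h' => rw [D₂.cup_rightUnique h h']
  cup_irrefl := by
    rintro (a | a) h
    · exact D₁.cup_irrefl a (Sum.liftRel_inl_inl.1 h)
    · exact D₂.cup_irrefl a (Sum.liftRel_inr_inr.1 h)
  not_cup_φ := by
    rintro (b | b) _ (h | h)
    exacts [D₁.not_cup_φ b _ h, D₂.not_cup_φ b _ h]
  exists_chain := by
    rintro _ _ (_ | h | h)
    · obtain ⟨l, hl⟩ := D₁.exists_chain h
      exact ⟨_, hl.map (A' := A₁.and A₂) Sum.inl (fun _ _ => .andl) (fun _ _ => .inl)⟩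
    · obtain ⟨l, hl⟩ := D₂.exists_chain h
      exact ⟨_, hl.map (A' := A₁.and A₂) Sum.inr (fun _ _ => .andr) (fun _ _ => .inr)⟩
  exists_chain_mem := by
    rintro (a | a)
    · obtain ⟨b, b', l, h, hl, ha⟩ := D₁.exists_chain_mem a
      exact ⟨.inl b, .inl b', _, h.andl,
        hl.map (A' := A₁.and A₂) Sum.inl (fun _ _ => .andl) (fun _ _ => .inl),
        List.mem_map_of_mem ha⟩
    · obtain ⟨b, b', l, h, hl, ha⟩ := D₂.exists_chain_mem a
      exact ⟨.inr b, .inr b', _, h.andr,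
        hl.map (A' := A₁.and A₂) Sum.inr (fun _ _ => .andr) (fun _ _ => .inr),
        List.mem_map_of_mem ha⟩

theorem tensRel_rel : tensRel D₁.rel D₂.rel = (D₁.tens D₂).rel := by
  funext s t
  apply propext
  constructor
  · rintro (⟨x, y, ⟨a, a', h, rfl, rfl⟩ | ⟨b, rfl, rfl⟩ | ⟨b, rfl, rfl⟩, rfl, rfl⟩ |
        ⟨x, y, ⟨a, a', h, rfl, rfl⟩ | ⟨b, rfl, rfl⟩ | ⟨b, rfl, rfl⟩, rfl, rfl⟩)
    · exact .inl ⟨.inl a, .inl a', .inl h, rfl, rfl⟩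
    · exact .inr (.inl ⟨.inl b, rfl, rfl⟩)
    · exact .inr (.inr ⟨.inl b, rfl, rfl⟩)
    · exact .inl ⟨.inr a, .inr a', .inr h, rfl, rfl⟩
    · exact .inr (.inl ⟨.inr b, rfl, rfl⟩)
    · exact .inr (.inr ⟨.inr b, rfl, rfl⟩)
  · rintro (⟨_, _, h | h, rfl, rfl⟩ | ⟨b | b, rfl, rfl⟩ | ⟨b | b, rfl, rfl⟩)
    · exact .inl ⟨_, _, .inl ⟨_, _, h, rfl, rfl⟩, rfl, rfl⟩
    · exact .inr ⟨_, _, .inl ⟨_, _, h, rfl, rfl⟩, rfl, rfl⟩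
    · exact .inl ⟨_, _, D₁.rel_φ b, rfl, rfl⟩
    · exact .inr ⟨_, _, D₂.rel_φ b, rfl, rfl⟩
    · exact .inl ⟨_, _, D₁.rel_symm (D₁.rel_φ b), rfl, rfl⟩
    · exact .inr ⟨_, _, D₂.rel_symm (D₂.rel_φ b), rfl, rfl⟩

end Tens

section Comp

variable (D₁ : Diagram A B) (D₂ : Diagram B C)

def compCup (a a' : Occ A) : Prop :=
  D₁.cup a a' ∨ Relation.Map D₂.cup D₁.φ D₁.φ a a'

theorem exists_chain_compCup {b w : Occ B} {lB : List (Occ B)} (h : Chain D₂.cup b w lB) :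
    ∃ lA, Chain (compCup D₁ D₂) (D₁.φ b) (D₁.φ w) lA ∧
      ∀ ⦃c c' l₁⦄, c ∈ lB → SameAtom c c' → Chain D₁.cup (D₁.φ c) (D₁.φ c') l₁ → l₁ ⊆ lA := by
  induction h with
  | @single b b' hs =>
    obtain ⟨l₀, hl₀⟩ := D₁.exists_chain hs
    refine ⟨l₀, hl₀.mono fun _ _ => .inl, fun c c' l₁ hc hcc' hl₁ => ?_⟩
    simp only [List.mem_cons, List.not_mem_nil, or_false] at hc
    rcases hc with rfl | rfl
    · obtain rfl := hs.right_unique hcc'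
      rw [D₁.chain_eq hl₁ hl₀]
      exact List.Subset.refl _
    · exact absurd hcc' hs.not_sameAtom_right
  | @cons b b' v w l hs hcup h ih =>
    obtain ⟨lA, hlA, hsub⟩ := ih
    obtain ⟨l₀, hl₀⟩ := D₁.exists_chain hs
    refine ⟨l₀ ++ lA, (hl₀.mono fun _ _ => .inl).append (.inr ⟨b', v, hcup, rfl, rfl⟩) hlA,
      fun c c' l₁ hc hcc' hl₁ => ?_⟩
    simp only [List.mem_cons] at hc
    rcases hc with rfl | rfl | hc
    · obtain rfl := hs.right_unique hcc'
      rw [D₁.chain_eq hl₁ hl₀]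
      exact List.subset_append_left _ _
    · exact absurd hcc' hs.not_sameAtom_right
    · exact fun a ha => List.mem_append_right _ (hsub hc hcc' hl₁ ha)

def comp : Diagram A C where
  φ := D₁.φ ∘ D₂.φ
  cup := compCup D₁ D₂
  φ_injective := D₁.φ_injective.comp D₂.φ_injective
  cup_symm := by
    rintro _ _ (h | ⟨b, b', h, rfl, rfl⟩)
    exacts [.inl (D₁.cup_symm h), .inr ⟨b', b, D₂.cup_symm h, rfl, rfl⟩]
  cup_rightUnique := by
    rintro _ _ _ (h | ⟨b, b₁, h, rfl, rfl⟩) (h' | ⟨b', b₂, h', hb, rfl⟩)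
    · exact D₁.cup_rightUnique h h'
    · exact (D₁.not_cup_φ _ _ (hb ▸ h)).elim
    · exact (D₁.not_cup_φ _ _ h').elim
    · obtain rfl := D₁.φ_injective hb
      rw [D₂.cup_rightUnique h h']
  cup_irrefl := by
    rintro a (h | ⟨b, b', h, rfl, hb⟩)
    · exact D₁.cup_irrefl a h
    · exact D₂.cup_irrefl b (D₁.φ_injective hb ▸ h)
  not_cup_φ := by
    rintro c a (h | ⟨b, b', h, hb, rfl⟩)
    · exact D₁.not_cup_φ _ _ h
    · exact D₂.not_cup_φ c _ (D₁.φ_injective hb ▸ h)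
  exists_chain := by
    intro c c' h
    obtain ⟨lB, hlB⟩ := D₂.exists_chain h
    obtain ⟨lA, hlA, -⟩ := exists_chain_compCup D₁ D₂ hlB
    exact ⟨lA, hlA⟩
  exists_chain_mem := by
    intro a
    obtain ⟨b, b', l₁, hbb', hl₁, ha⟩ := D₁.exists_chain_mem a
    obtain ⟨c, c', lB, hcc', hlB, hb⟩ := D₂.exists_chain_mem b
    obtain ⟨lA, hlA, hsub⟩ := exists_chain_compCup D₁ D₂ hlB
    exact ⟨c, c', lA, hcc', hlA, hsub hb hbb' hl₁ ha⟩

theorem rel_comp_of_compRel {s t : Occ A ⊕ Occ C} (h : compRel D₁.rel D₂.rel s t) :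
    (D₁.comp D₂).rel s t := by
  obtain ⟨hne, hpath⟩ := h
  -- A path in the glued graph stays inside one block of `(D₁.comp D₂).rel`, once every
  -- middle occurrence `b` is identified with the source occurrence `D₁.φ b`.
  let π : Occ A ⊕ Occ B ⊕ Occ C → Occ A ⊕ Occ C :=
    Sum.elim Sum.inl (Sum.elim (Sum.inl ∘ D₁.φ) Sum.inr)
  have hπ : ∀ s, π (Sum.map (fun a => a) Sum.inr s) = s := by rintro (_ | _) <;> rfl
  have hblock : Relation.ReflGen (D₁.comp D₂).rel (π (Sum.map (fun a => a) Sum.inr s))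
      (π (Sum.map (fun a => a) Sum.inr t)) := by
    generalize Sum.map (fun a => a) Sum.inr t = y at hpath ⊢
    induction hpath with
    | refl => exact .refl
    | tail _ hedge ih =>
      refine (D₁.comp D₂).reflGen_rel_trans ih ?_
      rcases hedge with ⟨_, _, ⟨a, a', h, rfl, rfl⟩ | ⟨b, rfl, rfl⟩ | ⟨b, rfl, rfl⟩, rfl, rfl⟩ |
        ⟨_, _, ⟨b, b', h, rfl, rfl⟩ | ⟨c, rfl, rfl⟩ | ⟨c, rfl, rfl⟩, rfl, rfl⟩
      · exact .single (.inl ⟨a, a', .inl h, rfl, rfl⟩)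
      · exact .refl
      · exact .refl
      · exact .single (.inl ⟨_, _, .inr ⟨b, b', h, rfl, rfl⟩, rfl, rfl⟩)
      · exact .single ((D₁.comp D₂).rel_φ c)
      · exact .single ((D₁.comp D₂).rel_symm ((D₁.comp D₂).rel_φ c))
  rw [hπ, hπ] at hblock
  cases hblock with
  | refl => exact absurd rfl hne
  | single h => exact h

theorem compRel_of_rel_comp {s t : Occ A ⊕ Occ C} (h : (D₁.comp D₂).rel s t) :
    compRel D₁.rel D₂.rel s t := by
  refine ⟨fun hst => (D₁.comp D₂).rel_irrefl _ (hst ▸ h), ?_⟩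
  rcases h with ⟨a, a', h | ⟨b, b', h, rfl, rfl⟩, rfl, rfl⟩ | ⟨c, rfl, rfl⟩ | ⟨c, rfl, rfl⟩
  · exact .single (.inl ⟨_, _, (D₁.rel_inl_inl).2 h, rfl, rfl⟩)
  · exact .head (.inl ⟨_, _, D₁.rel_φ b, rfl, rfl⟩)
      (.head (.inr ⟨_, _, (D₂.rel_inl_inl).2 h, rfl, rfl⟩)
        (.single (.inl ⟨_, _, D₁.rel_symm (D₁.rel_φ b'), rfl, rfl⟩)))
  · exact .head (.inl ⟨_, _, D₁.rel_φ (D₂.φ c), rfl, rfl⟩)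
      (.single (.inr ⟨_, _, D₂.rel_φ c, rfl, rfl⟩))
  · exact .head (.inr ⟨_, _, D₂.rel_symm (D₂.rel_φ c), rfl, rfl⟩)
      (.single (.inl ⟨_, _, D₁.rel_symm (D₁.rel_φ (D₂.φ c)), rfl, rfl⟩))

theorem compRel_rel : compRel D₁.rel D₂.rel = (D₁.comp D₂).rel :=
  funext₂ fun _ _ => propext ⟨rel_comp_of_compRel D₁ D₂, compRel_of_rel_comp D₁ D₂⟩

end Comp

def t (x y z : V) : Diagram (.and (.rel x y) (.rel y z)) (.rel x z) where
  φ b := match b with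
    | false => .inl false
    | true => .inr true
  cup a a' := (a = .inl true ∧ a' = .inr false) ∨ (a = .inr false ∧ a' = .inl true)
  φ_injective := by rintro (_ | _) (_ | _) h <;> first | rfl | cases h
  cup_symm := by
    rintro _ _ (⟨rfl, rfl⟩ | ⟨rfl, rfl⟩)
    exacts [.inr ⟨rfl, rfl⟩, .inl ⟨rfl, rfl⟩]
  cup_rightUnique := by
    rintro _ _ _ (⟨rfl, rfl⟩ | ⟨rfl, rfl⟩) (⟨h, rfl⟩ | ⟨h, rfl⟩) <;> first | rfl | cases h
  cup_irrefl := by rintro _ (⟨rfl, h⟩ | ⟨rfl, h⟩) <;> cases h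
  not_cup_φ := by rintro (_ | _) _ (⟨h, -⟩ | ⟨h, -⟩) <;> cases h
  exists_chain := by
    rintro _ _ ⟨⟩
    exact ⟨_, .cons (.andl (.atom x y)) (.inl ⟨rfl, rfl⟩) (.single (.andr (.atom y z)))⟩
  exists_chain_mem a :=
    ⟨false, true, _, .atom x z, .cons (.andl (.atom x y)) (.inl ⟨rfl, rfl⟩)
      (.single (.andr (.atom y z))), by
        rcases a with (_ | _) | (_ | _)
        exacts [.head _, .tail _ (.head _), .tail _ (.tail _ (.head _)),
          .tail _ (.tail _ (.tail _ (.head _)))]⟩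

theorem GRel_t (x y z : V) : GRel (.t x y z) = (t x y z).rel := by
  funext s s'
  apply propext
  constructor
  · rintro (⟨rfl, rfl⟩ | ⟨rfl, rfl⟩ | ⟨rfl, rfl⟩ | ⟨rfl, rfl⟩ | ⟨rfl, rfl⟩ | ⟨rfl, rfl⟩)
    · exact (t x y z).rel_φ false
    · exact (t x y z).rel_symm ((t x y z).rel_φ false)
    · exact (t x y z).rel_φ true
    · exact (t x y z).rel_symm ((t x y z).rel_φ true)
    · exact .inl ⟨_, _, Or.inl ⟨rfl, rfl⟩, rfl, rfl⟩
    · exact .inl ⟨_, _, Or.inr ⟨rfl, rfl⟩, rfl, rfl⟩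
  · simp only [rel, t, Relation.Map, relabel]
    rintro (⟨_, _, ⟨rfl, rfl⟩ | ⟨rfl, rfl⟩, rfl, rfl⟩ | ⟨_ | _, rfl, rfl⟩ | ⟨_ | _, rfl, rfl⟩) <;>
      simp only [GRel] <;> tauto

theorem corelabel_symm {α β : Type} (e : β ≃ α) : corelabel e.symm = relabel e := by
  funext s s'
  apply propext
  constructor
  · rintro (⟨a, rfl, rfl⟩ | ⟨a, rfl, rfl⟩)
    · exact .inl ⟨e.symm a, by simp, rfl⟩
    · exact .inr ⟨e.symm a, rfl, by simp⟩
  · rintro (⟨b, rfl, rfl⟩ | ⟨b, rfl, rfl⟩)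
    · exact .inl ⟨e b, rfl, by simp⟩
    · exact .inr ⟨e b, by simp, rfl⟩

theorem exists_GRel_eq_rel {A B : Fm V} (f : Ar V A B) (hf : rLess f) :
    ∃ D : Diagram A B, GRel f = D.rel := by
  induction f with
  | id A => exact exists_relabel_eq_rel (Equiv.refl _) (fun _ _ h => h) fun _ => rfl
  | comp g f ihg ihf =>
    obtain ⟨Dg, hDg⟩ := ihg hf.1
    obtain ⟨Df, hDf⟩ := ihf hf.2
    exact ⟨Df.comp Dg, by rw [← compRel_rel, ← hDf, ← hDg]; rfl⟩
  | tens f g ihf ihg =>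
    obtain ⟨Df, hDf⟩ := ihf hf.1
    obtain ⟨Dg, hDg⟩ := ihg hf.2
    exact ⟨Df.tens Dg, by rw [← tensRel_rel, ← hDf, ← hDg]; rfl⟩
  | bto A B C =>
    refine exists_relabel_eq_rel (A := A.and (B.and C)) (B := (A.and B).and C)
      (Equiv.sumAssoc (Occ A) (Occ B) (Occ C)) SameAtom.sumAssoc ?_
    rintro ((_ | _) | _) <;> rfl
  | bfrom A B C =>
    refine exists_relabel_eq_rel (A := (A.and B).and C) (B := A.and (B.and C))
      (Equiv.sumAssoc (Occ A) (Occ B) (Occ C)).symm SameAtom.sumAssoc_symm ?_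
    rintro (_ | _ | _) <;> rfl
  | dto A =>
    exact exists_relabel_eq_rel (A := A.and .top) (Equiv.sumEmpty (Occ A) Empty).symm
      (fun _ _ h => .andl (B := .top) h) fun _ => rfl
  | dfrom A =>
    obtain ⟨D, hD⟩ := exists_relabel_eq_rel (B := A.and .top) (Equiv.sumEmpty (Occ A) Empty)
      (by rintro _ _ (_ | h | h); exacts [h, nomatch h]) fun _ => rfl
    exact ⟨D, (corelabel_symm _).trans hD⟩
  | sto A =>
    exact exists_relabel_eq_rel (A := .and .top A) (Equiv.emptySum Empty (Occ A)).symm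
      (fun _ _ h => .andr (A := .top) h) fun _ => rfl
  | sfrom A =>
    obtain ⟨D, hD⟩ := exists_relabel_eq_rel (B := .and .top A) (Equiv.emptySum Empty (Occ A))
      (by rintro _ _ (_ | h | h); exacts [(nomatch h), h]) fun _ => rfl
    exact ⟨D, (corelabel_symm _).trans hD⟩
  | c A B =>
    exact exists_relabel_eq_rel (A := A.and B) (B := B.and A) (Equiv.sumComm (Occ B) (Occ A))
      SameAtom.sumComm fun _ => rfl
  | r x => exact hf.elim
  | t x y z => exact ⟨t x y z, GRel_t x y z⟩

end Diagram

theorem genClosed_eq_of_chain {A B : Fm V} {f : Ar V A B} {D : Diagram A B}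
    (hD : GRel f = D.rel) {b b' : Occ B} {l : List (Occ A)} {u₀ : Occ A}
    (hl : Chain D.cup (D.φ b) (D.φ b') l) (hu₀ : u₀ ∈ l) : genClosed f u₀ = {a | a ∈ l} := by
  have hcup : ∀ a a', GRel f (.inl a) (.inl a') ↔ D.cup a a' := fun _ _ => hD ▸ D.rel_inl_inl
  refine subset_antisymm (Set.sInter_subset_of_mem ⟨fun a a' h => ?_, hu₀⟩) fun a ha => ?_
  · rw [hcup] at h
    have h' : SameAtom a' a ∨ SameAtom a a' ∨ D.cup a' a := by
      rcases h with h | h | h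
      exacts [.inr (.inl h), .inl h, .inr (.inr (D.cup_symm h))]
    have hadj : ∀ {x y}, x ∈ l → SameAtom x y ∨ SameAtom y x ∨ D.cup x y → y ∈ l :=
      hl.mem_of_adj D.cup_symm D.cup_rightUnique (D.not_cup_φ b) (D.not_cup_φ b')
    exact ⟨fun ha => hadj ha h, fun ha' => hadj ha' h'⟩
  · rintro U ⟨hU, hu₀U⟩
    have hU' : ∀ x y, SameAtom x y ∨ D.cup x y → (x ∈ U ↔ y ∈ U) := by
      rintro x y (h | h)
      exacts [hU x y (.inl h), hU x y (.inr (.inr ((hcup x y).2 h)))]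
    exact ((hl.mem_iff_of_closed hU' ha).trans (hl.mem_iff_of_closed hU' hu₀).symm).2 hu₀U

/-- structure of maximal sequences. -/
theorem stmt8 {V : Type} {A B : Fm V} (f : Ar V A B) (hf : rLess f) (u0 : Occ A) :
    ∃ n : ℕ, 1 ≤ n ∧ ∃ u : ℕ → Occ A,
      Set.InjOn u (Set.Iio (2 * n)) ∧
      genClosed f u0 = u '' Set.Iio (2 * n) ∧
      (∀ i < n, SameAtom (u (2 * i)) (u (2 * i + 1))) ∧
      (∀ j, j + 1 < n → GRel f (Sum.inl (u (2 * j + 1))) (Sum.inl (u (2 * j + 2)))) ∧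
      ∃ ox oy : Occ B, SameAtom ox oy ∧
        GRel f (Sum.inl (u 0)) (Sum.inr ox) ∧
        GRel f (Sum.inl (u (2 * n - 1))) (Sum.inr oy) := by
  obtain ⟨D, hD⟩ := Diagram.exists_GRel_eq_rel f hf
  obtain ⟨b, b', l, hb, hl, hu₀⟩ := D.exists_chain_mem u0
  obtain ⟨n, hn, hlen⟩ := hl.length_eq
  refine ⟨n, hn, (l.getD · u0), hlen ▸ (hl.nodup D.cup_rightUnique (D.not_cup_φ b')).injOn_getD u0,
    by rw [genClosed_eq_of_chain hD hl hu₀, ← hlen, l.image_getD_Iio_length],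
    fun i hi => hl.sameAtom_getD u0 i (by omega),
    fun j hj => hD ▸ (D.rel_inl_inl).2 (hl.cup_getD u0 j (by omega)), b, b', hb, ?_, ?_⟩
  · simp only [hD, hl.getD_zero]
    exact D.rel_φ b
  · simp only [hD, show 2 * n - 1 = l.length - 1 by omega, hl.getD_length_sub_one]
    exact D.rel_φ b'

end DP
end
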